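/- arXiv:1402.4118 — 8 statements merged into one kernel-verified Lean document; each statement's English description precedes it below -/
import Mathlib

section
/- Let d > 0, c > 0, α > 0, let λ⁻ < 0 < λ⁺ be the roots of −dλ² + cλ + α = 0, and set ρ = d(λ⁺ − λ⁻) = √(c² + 4dα). Suppose h : ℝ → ℝ is twice continuously differentiable and h, h', h'' all satisfy growth bounds |h(x)| ≤ C·e^{μ⁻x} for x ≤ 0 and |h(x)| ≤ C·e^{μ⁺x} for x ≥ 0 with λ⁻ < μ⁻ and μ⁺ < λ⁺. Define G(x) = (1/ρ)·(∫_{−∞}^{x} e^{λ⁻(x−y)}·(−d·h''(y) + c·h'(y) + α·h(y)) dy + ∫_{x}^{∞} e^{λ⁺(x−y)}·(−d·h''(y) + c·h'(y) + α·h(y)) dy). Then G(x) = h(x) for all x ∈ ℝ. -/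
open Set Filter MeasureTheory Real

-- exp(b*y) integrable on Iic x for b > 0
lemma exp_mul_integrableOn_Iic {b : ℝ} (hb : 0 < b) (x : ℝ) :
    IntegrableOn (fun y => Real.exp (b * y)) (Set.Iic x) := by
  have h1 : IntegrableOn (fun y => Real.exp (-b * y)) (Set.Ioi (-x)) :=
    exp_neg_integrableOn_Ioi (-x) hb
  have h2 := (MeasurePreserving.integrableOn_comp_preimage
    (Measure.measurePreserving_neg (volume : Measure ℝ))
    (Homeomorph.neg ℝ).measurableEmbedding).2 h1
  have hset : (Neg.neg : ℝ → ℝ) ⁻¹' Set.Ioi (-x) = Set.Iio x := by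
    ext y; simp
  rw [integrableOn_Iic_iff_integrableOn_Iio]
  rw [hset] at h2
  refine h2.congr_fun (fun y _ => ?_) measurableSet_Iio
  simp [Function.comp, neg_mul_neg]

lemma aux_bound_Iic {g : ℝ → ℝ} {C μm μp : ℝ}
    (h1 : ∀ y ≤ (0:ℝ), |g y| ≤ C * Real.exp (μm * y))
    (h2 : ∀ y ≥ (0:ℝ), |g y| ≤ C * Real.exp (μp * y)) (x : ℝ) :
    ∀ y ≤ x, |g y| ≤ C * Real.exp ((|μp| + |μm|) * |x|) * Real.exp (μm * y) := by
  have hC : 0 ≤ C := by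
    have h0 := h1 0 le_rfl
    simp at h0
    linarith [abs_nonneg (g 0)]
  intro y hy
  have hE : (1:ℝ) ≤ Real.exp ((|μp| + |μm|) * |x|) :=
    Real.one_le_exp (by positivity)
  rcases le_or_gt y 0 with h0 | h0
  · calc |g y| ≤ C * Real.exp (μm * y) := h1 y h0
      _ ≤ C * Real.exp ((|μp| + |μm|) * |x|) * Real.exp (μm * y) :=
        mul_le_mul_of_nonneg_right (by nlinarith) (Real.exp_pos _).le
  · have hy0 : 0 ≤ y := h0.le
    have hyx : y ≤ |x| := le_trans hy (le_abs_self x)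
    have key : μp * y ≤ (|μp| + |μm|) * |x| + μm * y := by
      have a1 : μp * y ≤ |μp| * |x| :=
        le_trans (mul_le_mul_of_nonneg_right (le_abs_self μp) hy0)
          (mul_le_mul_of_nonneg_left hyx (abs_nonneg μp))
      have a2 : -(|μm| * |x|) ≤ μm * y := by
        have : -|μm| * y ≤ μm * y := mul_le_mul_of_nonneg_right (neg_abs_le μm) hy0
        nlinarith [mul_le_mul_of_nonneg_left hyx (abs_nonneg μm)]
      nlinarith
    calc |g y| ≤ C * Real.exp (μp * y) := h2 y hy0
      _ ≤ C * Real.exp ((|μp| + |μm|) * |x|) * Real.exp (μm * y) := by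
        rw [mul_assoc, ← Real.exp_add]
        exact mul_le_mul_of_nonneg_left (Real.exp_le_exp.2 key) hC

lemma aux_bound_Ici {g : ℝ → ℝ} {C μm μp : ℝ}
    (h1 : ∀ y ≤ (0:ℝ), |g y| ≤ C * Real.exp (μm * y))
    (h2 : ∀ y ≥ (0:ℝ), |g y| ≤ C * Real.exp (μp * y)) (x : ℝ) :
    ∀ y ≥ x, |g y| ≤ C * Real.exp ((|μp| + |μm|) * |x|) * Real.exp (μp * y) := by
  have hC : 0 ≤ C := by
    have h0 := h1 0 le_rfl
    simp at h0
    linarith [abs_nonneg (g 0)]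
  intro y hy
  have hE : (1:ℝ) ≤ Real.exp ((|μp| + |μm|) * |x|) :=
    Real.one_le_exp (by positivity)
  rcases le_or_gt 0 y with h0 | h0
  · calc |g y| ≤ C * Real.exp (μp * y) := h2 y h0
      _ ≤ C * Real.exp ((|μp| + |μm|) * |x|) * Real.exp (μp * y) :=
        mul_le_mul_of_nonneg_right (by nlinarith) (Real.exp_pos _).le
  · have hy0 : y ≤ 0 := h0.le
    have hyx : -y ≤ |x| := by
      have : x ≤ y := hy
      have : -y ≤ -x := by linarith
      exact le_trans this (neg_le_abs x)
    have key : μm * y ≤ (|μp| + |μm|) * |x| + μp * y := by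
      have a1 : μm * y ≤ |μm| * |x| := by
        nlinarith [neg_abs_le μm, mul_le_mul_of_nonneg_left hyx (abs_nonneg μm)]
      have a2 : -(|μp| * |x|) ≤ μp * y := by
        nlinarith [le_abs_self μp, mul_le_mul_of_nonneg_left hyx (abs_nonneg μp)]
      nlinarith
    calc |g y| ≤ C * Real.exp (μm * y) := h1 y hy0
      _ ≤ C * Real.exp ((|μp| + |μm|) * |x|) * Real.exp (μp * y) := by
        rw [mul_assoc, ← Real.exp_add]
        exact mul_le_mul_of_nonneg_left (Real.exp_le_exp.2 key) hC

theorem stmt_4 (d c α lm lp ρ : ℝ) (hd : 0 < d) (hc : 0 < c) (hα : 0 < α)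
    (hlm : lm < 0) (hlp : 0 < lp)
    (hrm : -d * lm ^ 2 + c * lm + α = 0) (hrp : -d * lp ^ 2 + c * lp + α = 0)
    (hρ : ρ = d * (lp - lm))
    (h : ℝ → ℝ) (hh : ContDiff ℝ 2 h)
    (μm μp : ℝ) (hμm : lm < μm) (hμp : μp < lp) (C : ℝ)
    (hb : ∀ g ∈ [h, deriv h, deriv (deriv h)],
      (∀ x ≤ (0 : ℝ), |g x| ≤ C * Real.exp (μm * x)) ∧
      (∀ x ≥ (0 : ℝ), |g x| ≤ C * Real.exp (μp * x))) :
    ∀ x : ℝ,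
      (1 / ρ) * ((∫ y in Set.Iic x, Real.exp (lm * (x - y)) *
          (-d * deriv (deriv h) y + c * deriv h y + α * h y)) +
        ∫ y in Set.Ici x, Real.exp (lp * (x - y)) *
          (-d * deriv (deriv h) y + c * deriv h y + α * h y)) = h x := by
  -- root identities
  have hne : lm - lp ≠ 0 := by nlinarith
  have hc2 : c = d * (lm + lp) := by
    have key : (lm - lp) * (c - d * (lm + lp)) = 0 := by linear_combination hrm - hrp
    rcases mul_eq_zero.mp key with h' | h'
    · exact absurd h' hne
    · linarith
  have ha2 : α = -d * (lm * lp) := by linear_combination hrm - lm * hc2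
  -- smoothness
  have hh2 : ContDiff ℝ (1 + 1) h := by
    have : ((1:WithTop ℕ∞) + 1) = 2 := by norm_num
    rw [this]; exact hh
  have hD1 : Differentiable ℝ h := hh.differentiable (by norm_num)
  have hD : ContDiff ℝ 1 (deriv h) := (contDiff_succ_iff_deriv.mp hh2).2.2
  have hD2 : Differentiable ℝ (deriv h) := hD.differentiable (by norm_num)
  have hcont2 : Continuous (deriv (deriv h)) := hD.continuous_deriv le_rfl
  have hcont1 : Continuous (deriv h) := hD2.continuous
  have hcont0 : Continuous h := hD1.continuous
  set f : ℝ → ℝ := fun y => -d * deriv (deriv h) y + c * deriv h y + α * h y with hf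
  have hfc : Continuous f := by
    apply ((continuous_const.mul hcont2).add (continuous_const.mul hcont1)).add
      (continuous_const.mul hcont0)
  intro x
  set K : ℝ := C * Real.exp ((|μp| + |μm|) * |x|) with hK
  have hC : 0 ≤ C := by
    have h0 := (hb h (by simp)).1 0 le_rfl
    simp at h0
    linarith [abs_nonneg (h 0)]
  have hK0 : 0 ≤ K := by positivity
  -- component bounds
  have B0 := hb h (by simp)
  have B1 := hb (deriv h) (by simp)
  have B2 := hb (deriv (deriv h)) (by simp)
  have b0m := aux_bound_Iic B0.1 B0.2 x
  have b1m := aux_bound_Iic B1.1 B1.2 x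
  have b2m := aux_bound_Iic B2.1 B2.2 x
  have b0p := aux_bound_Ici B0.1 B0.2 x
  have b1p := aux_bound_Ici B1.1 B1.2 x
  have b2p := aux_bound_Ici B2.1 B2.2 x
  rw [← hK] at b0m b1m b2m b0p b1p b2p
  have Hfm : ∀ y ≤ x, |f y| ≤ (d + c + α) * K * Real.exp (μm * y) := by
    intro y hy
    have habs : |f y| ≤ d * |deriv (deriv h) y| + c * |deriv h y| + α * |h y| := by
      calc |f y| ≤ |(-d) * deriv (deriv h) y| + |c * deriv h y| + |α * h y| := by
            apply (abs_add_le _ _).trans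
            gcongr
            exact abs_add_le _ _
        _ = d * |deriv (deriv h) y| + c * |deriv h y| + α * |h y| := by
            rw [abs_mul, abs_mul, abs_mul, abs_of_nonneg hc.le, abs_of_nonneg hα.le,
              abs_neg, abs_of_nonneg hd.le]
    refine habs.trans (le_trans (add_le_add (add_le_add
      (mul_le_mul_of_nonneg_left (b2m y hy) hd.le)
      (mul_le_mul_of_nonneg_left (b1m y hy) hc.le))
      (mul_le_mul_of_nonneg_left (b0m y hy) hα.le)) (le_of_eq (by ring)))
  have Hfp : ∀ y ≥ x, |f y| ≤ (d + c + α) * K * Real.exp (μp * y) := by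
    intro y hy
    have habs : |f y| ≤ d * |deriv (deriv h) y| + c * |deriv h y| + α * |h y| := by
      calc |f y| ≤ |(-d) * deriv (deriv h) y| + |c * deriv h y| + |α * h y| := by
            apply (abs_add_le _ _).trans
            gcongr
            exact abs_add_le _ _
        _ = d * |deriv (deriv h) y| + c * |deriv h y| + α * |h y| := by
            rw [abs_mul, abs_mul, abs_mul, abs_of_nonneg hc.le, abs_of_nonneg hα.le,
              abs_neg, abs_of_nonneg hd.le]
    refine habs.trans (le_trans (add_le_add (add_le_add
      (mul_le_mul_of_nonneg_left (b2p y hy) hd.le)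
      (mul_le_mul_of_nonneg_left (b1p y hy) hc.le))
      (mul_le_mul_of_nonneg_left (b0p y hy) hα.le)) (le_of_eq (by ring)))
  -- left piece: F_m y = exp(lm(x-y)) * (h' y - lp * h y)
  set u : ℝ → ℝ := fun y => deriv h y - lp * h y with hu
  set Fm : ℝ → ℝ := fun y => Real.exp (lm * (x - y)) * u y with hFm
  have hFmderiv : ∀ y : ℝ, HasDerivAt Fm ((-1/d) * (Real.exp (lm * (x - y)) * f y)) y := by
    intro y
    have he : HasDerivAt (fun y => Real.exp (lm * (x - y)))
        (Real.exp (lm * (x - y)) * (lm * (-1))) y := by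
      exact (((hasDerivAt_id y).const_sub x).const_mul lm).exp
    have hu' : HasDerivAt u (deriv (deriv h) y - lp * deriv h y) y :=
      ((hD2 y).hasDerivAt).sub (((hD1 y).hasDerivAt).const_mul lp)
    have := he.mul hu'
    refine this.congr_deriv ?_
    simp only [hu, hf]
    rw [hc2, ha2]
    field_simp
    ring
  have hintm : IntegrableOn (fun y => (-1/d) * (Real.exp (lm * (x - y)) * f y)) (Iic x) := by
    have hexp : IntegrableOn (fun y => Real.exp (lm * x) * ((d + c + α) * K / d) *
        Real.exp ((μm - lm) * y)) (Iic x) :=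
      ((exp_mul_integrableOn_Iic (by linarith : 0 < μm - lm) x).const_mul _)
    refine Integrable.mono' hexp ?_ ?_
    · exact (continuous_const.mul (((continuous_const.mul
        (continuous_const.sub continuous_id)).rexp).mul hfc)).aestronglyMeasurable.restrict
    · rw [ae_restrict_iff' measurableSet_Iic]
      filter_upwards with y
      intro hy
      have hb' := Hfm y hy
      have : ‖(-1/d) * (Real.exp (lm * (x - y)) * f y)‖
          = (1/d) * (Real.exp (lm * (x - y)) * |f y|) := by
        rw [norm_mul, norm_mul, Real.norm_eq_abs, Real.norm_eq_abs, Real.norm_eq_abs,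
          abs_of_pos (Real.exp_pos _), abs_div, abs_neg, abs_one, abs_of_pos hd]
      rw [this]
      have hexpeq : Real.exp (lm * (x - y)) = Real.exp (lm * x) * Real.exp ((-lm) * y) := by
        rw [← Real.exp_add]; ring_nf
      rw [hexpeq]
      have h1 : Real.exp (lm * x) * Real.exp ((-lm) * y) * |f y|
          ≤ Real.exp (lm * x) * Real.exp ((-lm) * y) * ((d + c + α) * K * Real.exp (μm * y)) := by
        apply mul_le_mul_of_nonneg_left hb'
        positivity
      calc (1/d) * (Real.exp (lm * x) * Real.exp ((-lm) * y) * |f y|)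
          ≤ (1/d) * (Real.exp (lm * x) * Real.exp ((-lm) * y)
              * ((d + c + α) * K * Real.exp (μm * y))) := by
            apply mul_le_mul_of_nonneg_left h1; positivity
        _ = Real.exp (lm * x) * ((d + c + α) * K / d) * Real.exp ((μm - lm) * y) := by
            rw [show (μm - lm) * y = (-lm) * y + μm * y from by ring, Real.exp_add]
            field_simp
  -- |u| bound on Iic x
  have hum : ∀ y ≤ x, |u y| ≤ (1 + lp) * K * Real.exp (μm * y) := by
    intro y hy
    calc |u y| ≤ |deriv h y| + |lp * h y| := abs_sub _ _
      _ = |deriv h y| + lp * |h y| := by rw [abs_mul, abs_of_pos hlp]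
      _ ≤ K * Real.exp (μm * y) + lp * (K * Real.exp (μm * y)) :=
          add_le_add (b1m y hy) (mul_le_mul_of_nonneg_left (b0m y hy) hlp.le)
      _ = (1 + lp) * K * Real.exp (μm * y) := by ring
  have hFmtend : Filter.Tendsto Fm atBot (nhds 0) := by
    rw [tendsto_zero_iff_norm_tendsto_zero]
    have h1 : Filter.Tendsto (fun y : ℝ => (μm - lm) * y) atBot atBot :=
      Filter.Tendsto.const_mul_atBot (by linarith) tendsto_id
    have hlim : Filter.Tendsto (fun y => Real.exp (lm * x) * ((1 + lp) * K) *
        Real.exp ((μm - lm) * y)) atBot (nhds 0) := by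
      have h2 := (Real.tendsto_exp_atBot.comp h1).const_mul (Real.exp (lm * x) * ((1 + lp) * K))
      simpa using h2
    apply squeeze_zero' ?_ ?_ hlim
    · filter_upwards with y using norm_nonneg _
    · filter_upwards [Iic_mem_atBot x] with y hy
      have hnorm : ‖Fm y‖ = Real.exp (lm * (x - y)) * |u y| := by
        rw [hFm]
        rw [Real.norm_eq_abs, abs_mul, abs_of_pos (Real.exp_pos _)]
      rw [hnorm]
      calc Real.exp (lm * (x - y)) * |u y|
          ≤ Real.exp (lm * (x - y)) * ((1 + lp) * K * Real.exp (μm * y)) :=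
            mul_le_mul_of_nonneg_left (hum y hy) (Real.exp_pos _).le
        _ = Real.exp (lm * x) * ((1 + lp) * K) * Real.exp ((μm - lm) * y) := by
            rw [show (μm - lm) * y = μm * y - lm * y from by ring, Real.exp_sub,
              show lm * (x - y) = lm * x - lm * y from by ring, Real.exp_sub]
            field_simp
  have keym := integral_Iic_of_hasDerivAt_of_tendsto' (a := x)
      (fun y _ => hFmderiv y) hintm hFmtend
  rw [MeasureTheory.integral_const_mul] at keym
  have hFmx : Fm x = u x := by simp [hFm]
  rw [hFmx, sub_zero] at keym
  have hIm : (∫ y in Iic x, Real.exp (lm * (x - y)) * f y) = -d * u x := by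
    field_simp at keym
    linarith
  -- right piece
  set v : ℝ → ℝ := fun y => deriv h y - lm * h y with hv
  set Fp : ℝ → ℝ := fun y => Real.exp (lp * (x - y)) * v y with hFp
  have hFpderiv : ∀ y : ℝ, HasDerivAt Fp ((-1/d) * (Real.exp (lp * (x - y)) * f y)) y := by
    intro y
    have he : HasDerivAt (fun y => Real.exp (lp * (x - y)))
        (Real.exp (lp * (x - y)) * (lp * (-1))) y :=
      (((hasDerivAt_id y).const_sub x).const_mul lp).exp
    have hv' : HasDerivAt v (deriv (deriv h) y - lm * deriv h y) y :=
      ((hD2 y).hasDerivAt).sub (((hD1 y).hasDerivAt).const_mul lm)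
    have := he.mul hv'
    refine this.congr_deriv ?_
    simp only [hv, hf]
    rw [hc2, ha2]
    field_simp
    ring
  have hintp : IntegrableOn (fun y => (-1/d) * (Real.exp (lp * (x - y)) * f y)) (Ioi x) := by
    have hexp : IntegrableOn (fun y => Real.exp (lp * x) * ((d + c + α) * K / d) *
        Real.exp (-(lp - μp) * y)) (Ioi x) :=
      (exp_neg_integrableOn_Ioi x (by linarith : 0 < lp - μp)).const_mul _
    refine Integrable.mono' hexp ?_ ?_
    · exact (continuous_const.mul (((continuous_const.mul
        (continuous_const.sub continuous_id)).rexp).mul hfc)).aestronglyMeasurable.restrict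
    · rw [ae_restrict_iff' measurableSet_Ioi]
      filter_upwards with y
      intro hy
      have hb' := Hfp y (le_of_lt hy)
      have hnorm : ‖(-1/d) * (Real.exp (lp * (x - y)) * f y)‖
          = (1/d) * (Real.exp (lp * (x - y)) * |f y|) := by
        rw [norm_mul, norm_mul, Real.norm_eq_abs, Real.norm_eq_abs, Real.norm_eq_abs,
          abs_of_pos (Real.exp_pos _), abs_div, abs_neg, abs_one, abs_of_pos hd]
      rw [hnorm]
      have h1 : Real.exp (lp * (x - y)) * |f y|
          ≤ Real.exp (lp * (x - y)) * ((d + c + α) * K * Real.exp (μp * y)) :=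
        mul_le_mul_of_nonneg_left hb' (Real.exp_pos _).le
      calc (1/d) * (Real.exp (lp * (x - y)) * |f y|)
          ≤ (1/d) * (Real.exp (lp * (x - y)) * ((d + c + α) * K * Real.exp (μp * y))) := by
            apply mul_le_mul_of_nonneg_left h1; positivity
        _ = Real.exp (lp * x) * ((d + c + α) * K / d) * Real.exp (-(lp - μp) * y) := by
            rw [show -(lp - μp) * y = μp * y - lp * y from by ring, Real.exp_sub,
              show lp * (x - y) = lp * x - lp * y from by ring, Real.exp_sub]
            field_simp
  have hvp : ∀ y ≥ x, |v y| ≤ (1 + (-lm)) * K * Real.exp (μp * y) := by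
    intro y hy
    calc |v y| ≤ |deriv h y| + |lm * h y| := abs_sub _ _
      _ = |deriv h y| + (-lm) * |h y| := by rw [abs_mul, abs_of_neg hlm]
      _ ≤ K * Real.exp (μp * y) + (-lm) * (K * Real.exp (μp * y)) :=
          add_le_add (b1p y hy) (mul_le_mul_of_nonneg_left (b0p y hy) (by linarith))
      _ = (1 + (-lm)) * K * Real.exp (μp * y) := by ring
  have hFptend : Filter.Tendsto Fp atTop (nhds 0) := by
    rw [tendsto_zero_iff_norm_tendsto_zero]
    have h1 : Filter.Tendsto (fun y : ℝ => (μp - lp) * y) atTop atBot :=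
      Filter.Tendsto.const_mul_atTop_of_neg (by linarith) tendsto_id
    have hlim : Filter.Tendsto (fun y => Real.exp (lp * x) * ((1 + (-lm)) * K) *
        Real.exp ((μp - lp) * y)) atTop (nhds 0) := by
      have h2 := (Real.tendsto_exp_atBot.comp h1).const_mul
        (Real.exp (lp * x) * ((1 + (-lm)) * K))
      simpa using h2
    apply squeeze_zero' ?_ ?_ hlim
    · filter_upwards with y using norm_nonneg _
    · filter_upwards [Ici_mem_atTop x] with y hy
      have hnorm : ‖Fp y‖ = Real.exp (lp * (x - y)) * |v y| := by
        rw [hFp]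
        rw [Real.norm_eq_abs, abs_mul, abs_of_pos (Real.exp_pos _)]
      rw [hnorm]
      calc Real.exp (lp * (x - y)) * |v y|
          ≤ Real.exp (lp * (x - y)) * ((1 + (-lm)) * K * Real.exp (μp * y)) :=
            mul_le_mul_of_nonneg_left (hvp y hy) (Real.exp_pos _).le
        _ = Real.exp (lp * x) * ((1 + (-lm)) * K) * Real.exp ((μp - lp) * y) := by
            rw [show (μp - lp) * y = μp * y - lp * y from by ring, Real.exp_sub,
              show lp * (x - y) = lp * x - lp * y from by ring, Real.exp_sub]
            field_simp
  have keyp := integral_Ioi_of_hasDerivAt_of_tendsto' (a := x)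
      (fun y _ => hFpderiv y) hintp hFptend
  rw [MeasureTheory.integral_const_mul] at keyp
  have hFpx : Fp x = v x := by simp [hFp]
  rw [hFpx, zero_sub] at keyp
  have hIp : (∫ y in Ici x, Real.exp (lp * (x - y)) * f y) = d * v x := by
    rw [MeasureTheory.integral_Ici_eq_integral_Ioi]
    field_simp at keyp
    linarith
  rw [hIm, hIp, hρ]
  have hρ0 : d * (lp - lm) ≠ 0 := by
    have : 0 < lp - lm := by linarith
    positivity
  simp only [hu, hv]
  have hlplm : lp - lm ≠ 0 := by linarith
  field_simp
  ring
end

section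
/- Let d > 0, c > 0, α > 0, let λ⁻ < 0 < λ⁺ be the roots of −dλ² + cλ + α = 0, set ρ = √(c² + 4dα). Let M > 0, ε > 0, and λ be a real number with λ⁻ < λ < λ + ε < λ⁺. Define g(x) = max{e^{λx}(1 − M·e^{εx}), 0}, with non-smooth point x* = −(ln M)/ε, and define the piecewise function (Δg)(x) = f(λ)e^{λx} − M·f(λ+ε)e^{(λ+ε)x} for x < x* and (Δg)(x) = 0 for x > x*, where f(k) = −dk² + ck + α. Then for all x ∈ ℝ, (1/ρ)·(∫_{−∞}^{x} e^{λ⁻(x−y)}(Δg)(y) dy + ∫_{x}^{∞} e^{λ⁺(x−y)}(Δg)(y) dy) ≥ g(x). -/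
open Real MeasureTheory Set

lemma expInt_Ioi {b : ℝ} (hb : b < 0) (a : ℝ) :
    IntegrableOn (fun y : ℝ => Real.exp (b * y)) (Set.Ioi a) := by
  have := exp_neg_integrableOn_Ioi a (neg_pos.mpr hb)
  simpa using this

lemma expVal_Ioi {b : ℝ} (hb : b < 0) (a : ℝ) :
    ∫ y in Set.Ioi a, Real.exp (b * y) = Real.exp (b * a) / (-b) := by
  have h := integral_comp_mul_left_Ioi (fun u => Real.exp (-u)) a (b := -b) (by linarith)
  simp only [smul_eq_mul, neg_mul, neg_neg, integral_exp_neg_Ioi] at h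
  rw [h]; field_simp

lemma expInt_Iic {b : ℝ} (hb : 0 < b) (a : ℝ) :
    IntegrableOn (fun y : ℝ => Real.exp (b * y)) (Set.Iic a) := by
  have h : IntegrableOn (fun y : ℝ => Real.exp (-b * y)) (Set.Ioi (-a)) :=
    exp_neg_integrableOn_Ioi _ hb
  have h2 := (MeasurePreserving.integrableOn_comp_preimage
      (Measure.measurePreserving_neg (volume : Measure ℝ))
      (Homeomorph.neg ℝ).measurableEmbedding).2 h
  rw [integrableOn_Iic_iff_integrableOn_Iio]
  have hset : (Neg.neg ⁻¹' (Set.Ioi (-a)) : Set ℝ) = Set.Iio a := by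
    ext y; simp [neg_lt]
  rw [hset] at h2
  refine h2.congr_fun (fun y _ => ?_) measurableSet_Iio
  simp [Function.comp]

lemma expVal_Iic {b : ℝ} (hb : 0 < b) (a : ℝ) :
    ∫ y in Set.Iic a, Real.exp (b * y) = Real.exp (b * a) / b := by
  have h := integral_comp_neg_Ioi (-a) (fun y => Real.exp (b * y))
  rw [neg_neg] at h
  rw [← h]
  have hv := expVal_Ioi (b := -b) (by linarith) (-a)
  simp only [neg_mul] at hv
  calc ∫ x in Set.Ioi (-a), Real.exp (b * -x)
      = ∫ x in Set.Ioi (-a), Real.exp (-(b*x)) := by simp [mul_neg]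
    _ = Real.exp (b*a) / b := by rw [hv]; ring_nf

lemma hIntOn_Iic {p k1 k2 : ℝ} (h1 : p < k1) (h2 : p < k2) (A B x a : ℝ) :
    IntegrableOn (fun y => Real.exp (p*(x-y)) * (A * Real.exp (k1*y) - B * Real.exp (k2*y)))
      (Set.Iic a) := by
  have e1 : ∀ y : ℝ, Real.exp (p*(x-y)) * (A * Real.exp (k1*y) - B * Real.exp (k2*y))
      = (A * Real.exp (p*x)) * Real.exp ((k1-p)*y) - (B * Real.exp (p*x)) * Real.exp ((k2-p)*y) := by
    intro y
    rw [show p*(x-y) = p*x + -(p*y) by ring, Real.exp_add,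
      show (k1-p)*y = k1*y + -(p*y) by ring, Real.exp_add,
      show (k2-p)*y = k2*y + -(p*y) by ring, Real.exp_add]
    ring
  simp_rw [e1]
  exact ((expInt_Iic (by linarith) a).const_mul _).sub ((expInt_Iic (by linarith) a).const_mul _)

lemma hVal_Iic {p k1 k2 : ℝ} (h1 : p < k1) (h2 : p < k2) (A B x a : ℝ) :
    ∫ y in Set.Iic a, Real.exp (p*(x-y)) * (A * Real.exp (k1*y) - B * Real.exp (k2*y))
      = Real.exp (p*x) * (A * (Real.exp ((k1-p)*a)/(k1-p)) - B * (Real.exp ((k2-p)*a)/(k2-p))) := by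
  have e1 : ∀ y : ℝ, Real.exp (p*(x-y)) * (A * Real.exp (k1*y) - B * Real.exp (k2*y))
      = (A * Real.exp (p*x)) * Real.exp ((k1-p)*y) - (B * Real.exp (p*x)) * Real.exp ((k2-p)*y) := by
    intro y
    rw [show p*(x-y) = p*x + -(p*y) by ring, Real.exp_add,
      show (k1-p)*y = k1*y + -(p*y) by ring, Real.exp_add,
      show (k2-p)*y = k2*y + -(p*y) by ring, Real.exp_add]
    ring
  simp_rw [e1]
  rw [integral_sub ((expInt_Iic (by linarith : (0:ℝ) < k1 - p) a).const_mul _)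
      ((expInt_Iic (by linarith : (0:ℝ) < k2 - p) a).const_mul _),
    integral_const_mul, integral_const_mul, expVal_Iic (by linarith), expVal_Iic (by linarith)]
  ring

lemma hIntOn_Ioi {p k1 k2 : ℝ} (h1 : k1 < p) (h2 : k2 < p) (A B x a : ℝ) :
    IntegrableOn (fun y => Real.exp (p*(x-y)) * (A * Real.exp (k1*y) - B * Real.exp (k2*y)))
      (Set.Ioi a) := by
  have e1 : ∀ y : ℝ, Real.exp (p*(x-y)) * (A * Real.exp (k1*y) - B * Real.exp (k2*y))
      = (A * Real.exp (p*x)) * Real.exp ((k1-p)*y) - (B * Real.exp (p*x)) * Real.exp ((k2-p)*y) := by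
    intro y
    rw [show p*(x-y) = p*x + -(p*y) by ring, Real.exp_add,
      show (k1-p)*y = k1*y + -(p*y) by ring, Real.exp_add,
      show (k2-p)*y = k2*y + -(p*y) by ring, Real.exp_add]
    ring
  simp_rw [e1]
  exact ((expInt_Ioi (by linarith) a).const_mul _).sub ((expInt_Ioi (by linarith) a).const_mul _)

lemma hVal_Ioi {p k1 k2 : ℝ} (h1 : k1 < p) (h2 : k2 < p) (A B x a : ℝ) :
    ∫ y in Set.Ioi a, Real.exp (p*(x-y)) * (A * Real.exp (k1*y) - B * Real.exp (k2*y))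
      = Real.exp (p*x) * (A * (Real.exp ((k1-p)*a)/(p-k1)) - B * (Real.exp ((k2-p)*a)/(p-k2))) := by
  have e1 : ∀ y : ℝ, Real.exp (p*(x-y)) * (A * Real.exp (k1*y) - B * Real.exp (k2*y))
      = (A * Real.exp (p*x)) * Real.exp ((k1-p)*y) - (B * Real.exp (p*x)) * Real.exp ((k2-p)*y) := by
    intro y
    rw [show p*(x-y) = p*x + -(p*y) by ring, Real.exp_add,
      show (k1-p)*y = k1*y + -(p*y) by ring, Real.exp_add,
      show (k2-p)*y = k2*y + -(p*y) by ring, Real.exp_add]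
    ring
  simp_rw [e1]
  rw [integral_sub ((expInt_Ioi (by linarith : k1 - p < 0) a).const_mul _)
      ((expInt_Ioi (by linarith : k2 - p < 0) a).const_mul _),
    integral_const_mul, integral_const_mul, expVal_Ioi (by linarith), expVal_Ioi (by linarith)]
  ring

set_option maxHeartbeats 2000000 in
theorem stmt_5 (d c α lm lp ρ : ℝ) (hd : 0 < d) (hc : 0 < c) (hα : 0 < α)
    (hlm : lm < 0) (hlp : 0 < lp)
    (hrm : -d * lm ^ 2 + c * lm + α = 0) (hrp : -d * lp ^ 2 + c * lp + α = 0)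
    (hρ : ρ = Real.sqrt (c ^ 2 + 4 * d * α))
    (M ε l : ℝ) (hM : 0 < M) (hε : 0 < ε)
    (h1 : lm < l) (h2 : l + ε < lp) :
    let f : ℝ → ℝ := fun k => -d * k ^ 2 + c * k + α
    let g : ℝ → ℝ := fun x => max (Real.exp (l * x) * (1 - M * Real.exp (ε * x))) 0
    let xs : ℝ := -(Real.log M) / ε
    let Dg : ℝ → ℝ := fun x => if x < xs then
        f l * Real.exp (l * x) - M * f (l + ε) * Real.exp ((l + ε) * x) else 0
    ∀ x : ℝ, g x ≤ (1 / ρ) * ((∫ y in Set.Iic x, Real.exp (lm * (x - y)) * Dg y) +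
      ∫ y in Set.Ici x, Real.exp (lp * (x - y)) * Dg y) := by
  intro f g xs Dg x
  have hllp : l < lp := by linarith
  have hlε : lm < l + ε := by linarith
  have hlmp : lm < lp := by linarith
  have hcd : c = d * (lm + lp) := by
    have h0 : (lm - lp) * (c - d * (lm + lp)) = 0 := by linear_combination hrm - hrp
    rcases mul_eq_zero.mp h0 with h | h
    · nlinarith
    · linarith
  have hαd : α = -(d * lm * lp) := by linear_combination hrm - lm * hcd
  have hA : f l = d * ((l - lm) * (lp - l)) := by
    simp only [f]; linear_combination l * hcd + hαd
  have hB : f (l + ε) = d * ((l + ε - lm) * (lp - (l + ε))) := by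
    simp only [f]; linear_combination (l + ε) * hcd + hαd
  have hρd : ρ = d * (lp - lm) := by
    have hsq : c ^ 2 + 4 * d * α = (d * (lp - lm)) ^ 2 := by
      linear_combination (c + d * (lm + lp)) * hcd + 4 * d * hαd
    rw [hρ, hsq, Real.sqrt_sq (by nlinarith : (0:ℝ) ≤ d * (lp - lm))]
  have hρpos : 0 < ρ := by rw [hρd]; exact mul_pos hd (by linarith)
  have hMxs : M * Real.exp (ε * xs) = 1 := by
    have hxs : ε * xs = -Real.log M := by simp only [xs]; field_simp
    rw [hxs, Real.exp_neg, Real.exp_log hM]; field_simp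
  have hExs : Real.exp (ε * xs) = 1 / M := by
    rw [eq_div_iff hM.ne']; linarith [hMxs]
  have e2 : ∀ p : ℝ, ∀ y : ℝ, Real.exp (p * (x - y)) * Dg y
      = Set.indicator (Set.Iio xs)
        (fun y => Real.exp (p * (x - y)) * (f l * Real.exp (l * y)
          - M * f (l + ε) * Real.exp ((l + ε) * y))) y := by
    intro p y
    by_cases hy : y < xs
    · simp [Dg, Set.indicator_of_mem, Set.mem_Iio, hy]
    · simp [Dg, hy]
  rcases le_or_gt x xs with hx | hx
  · -- case x ≤ xs
    have hg : g x = Real.exp (l * x) * (1 - M * Real.exp (ε * x)) := by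
      have hle : M * Real.exp (ε * x) ≤ 1 := by
        have := Real.exp_le_exp.mpr (mul_le_mul_of_nonneg_left hx hε.le)
        nlinarith
      simp only [g]
      exact max_eq_left (by nlinarith [Real.exp_pos (l * x)])
    have hI1 : ∫ y in Set.Iic x, Real.exp (lm * (x - y)) * Dg y
        = Real.exp (lm*x) * (f l * (Real.exp ((l-lm)*x)/(l-lm))
          - (M * f (l+ε)) * (Real.exp ((l+ε-lm)*x)/(l+ε-lm))) := by
      rw [← hVal_Iic h1 hlε (f l) (M * f (l+ε)) x x]
      apply setIntegral_congr_ae measurableSet_Iic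
      have hae : ∀ᵐ y : ℝ, y ≠ xs := by
        simp [ae_iff, measure_singleton]
      filter_upwards [hae] with y hy hyx
      have hylt : y < xs := lt_of_le_of_ne (le_trans hyx hx) hy
      simp only [Dg, if_pos hylt]
    have hI2 : ∫ y in Set.Ici x, Real.exp (lp * (x - y)) * Dg y
        = Real.exp (lp*x) * (f l * (Real.exp ((l-lp)*x)/(lp-l))
            - (M * f (l+ε)) * (Real.exp ((l+ε-lp)*x)/(lp-(l+ε))))
          - Real.exp (lp*x) * (f l * (Real.exp ((l-lp)*xs)/(lp-l))
            - (M * f (l+ε)) * (Real.exp ((l+ε-lp)*xs)/(lp-(l+ε)))) := by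
      rw [integral_Ici_eq_integral_Ioi]
      simp_rw [e2 lp]
      rw [setIntegral_indicator measurableSet_Iio, Set.Ioi_inter_Iio,
        ← integral_Ioc_eq_integral_Ioo]
      have hsplit := setIntegral_union (μ := volume)
          (f := fun y => Real.exp (lp*(x-y)) * (f l * Real.exp (l*y)
            - M * f (l+ε) * Real.exp ((l+ε)*y)))
          (Set.Ioc_disjoint_Ioi le_rfl) measurableSet_Ioi
          ((hIntOn_Ioi hllp h2 (f l) (M * f (l+ε)) x x).mono_set Set.Ioc_subset_Ioi_self)
          (hIntOn_Ioi hllp h2 (f l) (M * f (l+ε)) x xs)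
      rw [Set.Ioc_union_Ioi_eq_Ioi hx] at hsplit
      rw [hVal_Ioi hllp h2 (f l) (M * f (l+ε)) x x,
        hVal_Ioi hllp h2 (f l) (M * f (l+ε)) x xs] at hsplit
      linarith
    rw [hg, hI1, hI2]
    have hS : (1/ρ) * (Real.exp (lm*x) * (f l * (Real.exp ((l-lm)*x)/(l-lm))
          - (M * f (l+ε)) * (Real.exp ((l+ε-lm)*x)/(l+ε-lm)))
        + (Real.exp (lp*x) * (f l * (Real.exp ((l-lp)*x)/(lp-l))
            - (M * f (l+ε)) * (Real.exp ((l+ε-lp)*x)/(lp-(l+ε))))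
          - Real.exp (lp*x) * (f l * (Real.exp ((l-lp)*xs)/(lp-l))
            - (M * f (l+ε)) * (Real.exp ((l+ε-lp)*xs)/(lp-(l+ε))))))
        = Real.exp (l*x) * (1 - M * Real.exp (ε*x))
          + (1/ρ) * (d * ε * (Real.exp (lp*x) * (Real.exp (l*xs) / Real.exp (lp*xs)))) := by
      rw [hA, hB, hρd]
      simp only [sub_mul, add_mul, Real.exp_sub, Real.exp_add, hExs]
      have h3 : l - lm ≠ 0 := by linarith
      have h4 : l + ε - lm ≠ 0 := by linarith
      have h5 : lp - l ≠ 0 := by linarith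
      have h6 : lp - (l + ε) ≠ 0 := by linarith
      have h7 : d * (lp - lm) ≠ 0 := ne_of_gt (mul_pos hd (by linarith))
      have h8 : lp - lm ≠ 0 := by linarith
      field_simp
      ring
    rw [hS]
    have hpos : 0 < (1/ρ) * (d * ε * (Real.exp (lp*x) * (Real.exp (l*xs) / Real.exp (lp*xs)))) :=
      mul_pos (one_div_pos.mpr hρpos) (by positivity)
    linarith
  · -- case xs < x
    have hg0 : g x = 0 := by
      have hge : (1:ℝ) ≤ M * Real.exp (ε * x) := by
        have := Real.exp_le_exp.mpr (mul_le_mul_of_nonneg_left hx.le hε.le)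
        nlinarith
      simp only [g]
      exact max_eq_right (by nlinarith [Real.exp_pos (l * x)])
    have hI2 : ∫ y in Set.Ici x, Real.exp (lp * (x - y)) * Dg y = 0 := by
      rw [setIntegral_congr_fun measurableSet_Ici (g := fun _ => (0:ℝ))
        (fun y hy => by
          have : ¬ y < xs := not_lt.mpr (le_trans hx.le hy)
          simp [Dg, this])]
      simp
    have hI1 : ∫ y in Set.Iic x, Real.exp (lm * (x - y)) * Dg y
        = Real.exp (lm*x) * (f l * (Real.exp ((l-lm)*xs)/(l-lm))
          - (M * f (l+ε)) * (Real.exp ((l+ε-lm)*xs)/(l+ε-lm))) := by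
      simp_rw [e2 lm]
      rw [setIntegral_indicator measurableSet_Iio]
      have hint : Set.Iic x ∩ Set.Iio xs = Set.Iio xs := by
        rw [Set.inter_eq_right]
        exact fun y hy => le_trans (le_of_lt hy) hx.le
      rw [hint, ← integral_Iic_eq_integral_Iio]
      exact hVal_Iic h1 hlε (f l) (M * f (l+ε)) x xs
    rw [hg0, hI1, hI2]
    have hV : Real.exp (lm*x) * (f l * (Real.exp ((l-lm)*xs)/(l-lm))
          - (M * f (l+ε)) * (Real.exp ((l+ε-lm)*xs)/(l+ε-lm)))
        = d * ε * (Real.exp (lm*x) * (Real.exp (l*xs) / Real.exp (lm*xs))) := by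
      rw [hA, hB]
      simp only [sub_mul, add_mul, Real.exp_sub, Real.exp_add, hExs]
      have h3 : l - lm ≠ 0 := by linarith
      have h4 : l + ε - lm ≠ 0 := by linarith
      field_simp
      ring
    rw [hV]
    have hpos : 0 < (1/ρ) * (d * ε * (Real.exp (lm*x) * (Real.exp (l*xs) / Real.exp (lm*xs))) + 0) :=
      mul_pos (one_div_pos.mpr hρpos) (by positivity)
    linarith
end

section
/- Let d1 > 0, c > 0, λ0 > 0, β > 0, S₋ > 0. Fix ε1 with 0 < ε1 < min{λ0, c/d1}. Then there exists M1* > 0 such that for all M1 ≥ M1* the inequality M1·ε1·(c − d1·ε1) ≥ β·M1^{−(λ0−ε1)/ε1} holds; consequently, for every x ≤ x1 := −(ln M1)/ε1, −β·e^{λ0 x} ≥ S₋·(d1·M1·ε1² − c·M1·ε1)·e^{ε1 x}. -/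
theorem stmt_6 (d1 c l0 β Sm : ℝ) (hd1 : 0 < d1) (hc : 0 < c) (hl0 : 0 < l0)
    (hβ : 0 < β) (hSm : 0 < Sm) (ε1 : ℝ) (hε1 : 0 < ε1)
    (hε1' : ε1 < min l0 (c / d1)) :
    ∃ M1s : ℝ, 0 < M1s ∧ ∀ M1 ≥ M1s,
      M1 * ε1 * (c - d1 * ε1) ≥ β * M1 ^ (-(l0 - ε1) / ε1) ∧
      ∀ x ≤ -(Real.log M1) / ε1,
        -β * Real.exp (l0 * x) ≥
          Sm * (d1 * M1 * ε1 ^ 2 - c * M1 * ε1) * Real.exp (ε1 * x) := by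
  have hεl : ε1 < l0 := lt_of_lt_of_le hε1' (min_le_left _ _)
  have hεc : ε1 < c / d1 := lt_of_lt_of_le hε1' (min_le_right _ _)
  have hAc : 0 < c - d1 * ε1 := by
    have := (lt_div_iff₀ hd1).mp hεc
    nlinarith
  set A : ℝ := ε1 * (c - d1 * ε1) with hAdef
  have hApos : 0 < A := mul_pos hε1 hAc
  refine ⟨max 1 (max (β / A) (β / (Sm * A))),
    lt_of_lt_of_le one_pos (le_max_left _ _), ?_⟩
  intro M1 hM1
  have hM1_1 : (1:ℝ) ≤ M1 := le_trans (le_max_left _ _) hM1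
  have hM1pos : 0 < M1 := lt_of_lt_of_le one_pos hM1_1
  have hβA : β / A ≤ M1 := le_trans (le_trans (le_max_left _ _) (le_max_right _ _)) hM1
  have hβSA : β / (Sm * A) ≤ M1 :=
    le_trans (le_trans (le_max_right _ _) (le_max_right _ _)) hM1
  have h1 : β ≤ M1 * A := (div_le_iff₀ hApos).mp hβA
  have h2 : β ≤ Sm * M1 * A := by
    have := (div_le_iff₀ (mul_pos hSm hApos)).mp hβSA
    nlinarith
  have hpow0 : 0 ≤ M1 ^ (-(l0 - ε1) / ε1) := Real.rpow_nonneg hM1pos.le _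
  have hpow : M1 ^ (-(l0 - ε1) / ε1) ≤ 1 :=
    Real.rpow_le_one_of_one_le_of_nonpos hM1_1
      (div_nonpos_of_nonpos_of_nonneg (by linarith) hε1.le)
  constructor
  · have : β * M1 ^ (-(l0 - ε1) / ε1) ≤ β := by nlinarith
    have hMA : M1 * ε1 * (c - d1 * ε1) = M1 * A := by rw [hAdef]; ring
    rw [ge_iff_le, hMA]
    linarith
  · intro x hx
    have hlog : 0 ≤ Real.log M1 := Real.log_nonneg hM1_1
    have hx0 : x ≤ 0 := le_trans hx (div_nonpos_of_nonpos_of_nonneg (by linarith) hε1.le)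
    have hexp : Real.exp (l0 * x) ≤ Real.exp (ε1 * x) :=
      Real.exp_le_exp.mpr (by nlinarith)
    have hE : 0 < Real.exp (ε1 * x) := Real.exp_pos _
    have hAeq : Sm * (d1 * M1 * ε1 ^ 2 - c * M1 * ε1) = -(Sm * M1 * A) := by
      rw [hAdef]; ring
    nlinarith [mul_le_mul_of_nonneg_right h2 hE.le,
      mul_le_mul_of_nonneg_left hexp hβ.le]
end

section
/- Let d3 > 0, c > 0, γ > 0, λ0 > 0 with c − d3·λ0 > 0, and let 0 < ε3 be small enough that c − d3·(λ0 + ε3) > 0. Let 0 < ε3 < ε2 and M2 > 0. Then for all sufficiently large M3 > 0: ((c(λ0+ε3) − d3(λ0+ε3)²)/(cλ0 − d3λ0²))·M3 ≥ M2·M3^{−(ε2−ε3)/ε3}, and consequently for all x ≤ x3 := −(ln M3)/ε3, γ·e^{λ0 x}(1 − M2·e^{ε2 x}) ≥ (γ/(cλ0 − d3λ0²))·(e^{λ0 x}(cλ0 − d3λ0²) − M3·e^{(λ0+ε3)x}(c(λ0+ε3) − d3(λ0+ε3)²)). -/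
theorem stmt_7 (d3 c γ l0 ε2 ε3 M2 : ℝ) (hd3 : 0 < d3) (hc : 0 < c) (hγ : 0 < γ)
    (hl0 : 0 < l0) (h1 : 0 < c - d3 * l0) (hε3 : 0 < ε3)
    (h2 : 0 < c - d3 * (l0 + ε3)) (h3 : ε3 < ε2) (hM2 : 0 < M2) :
    ∃ M3s : ℝ, 0 < M3s ∧ ∀ M3 ≥ M3s,
      ((c * (l0 + ε3) - d3 * (l0 + ε3) ^ 2) / (c * l0 - d3 * l0 ^ 2)) * M3 ≥
        M2 * M3 ^ (-(ε2 - ε3) / ε3) ∧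
      ∀ x ≤ -(Real.log M3) / ε3,
        γ * Real.exp (l0 * x) * (1 - M2 * Real.exp (ε2 * x)) ≥
          (γ / (c * l0 - d3 * l0 ^ 2)) *
            (Real.exp (l0 * x) * (c * l0 - d3 * l0 ^ 2) -
              M3 * Real.exp ((l0 + ε3) * x) * (c * (l0 + ε3) - d3 * (l0 + ε3) ^ 2)) := by
  set A := c * l0 - d3 * l0 ^ 2 with hA
  set B := c * (l0 + ε3) - d3 * (l0 + ε3) ^ 2 with hB
  have hApos : 0 < A := by nlinarith
  have hBpos : 0 < B := by nlinarith
  refine ⟨max 1 (M2 * A / B), lt_max_of_lt_left one_pos, fun M3 hM3 => ?_⟩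
  have hM31 : (1 : ℝ) ≤ M3 := le_trans (le_max_left _ _) hM3
  have hM3pos : 0 < M3 := lt_of_lt_of_le one_pos hM31
  have hM3b : M2 * A / B ≤ M3 := le_trans (le_max_right _ _) hM3
  have hrneg : -(ε2 - ε3) / ε3 ≤ 0 := by
    apply div_nonpos_of_nonpos_of_nonneg <;> linarith
  have hpow : M3 ^ (-(ε2 - ε3) / ε3) ≤ 1 :=
    Real.rpow_le_one_of_one_le_of_nonpos hM31 hrneg
  have key : M2 * M3 ^ (-(ε2 - ε3) / ε3) ≤ B / A * M3 := by
    have h1 : M2 * M3 ^ (-(ε2 - ε3) / ε3) ≤ M2 :=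
      (mul_le_iff_le_one_right hM2).2 hpow
    have h2 : M2 ≤ B / A * M3 := by
      rw [div_mul_eq_mul_div, le_div_iff₀ hApos]
      calc M2 * A = (M2 * A / B) * B := by field_simp
        _ ≤ M3 * B := by
            apply mul_le_mul_of_nonneg_right hM3b hBpos.le
        _ = B * M3 := by ring
    linarith
  constructor
  · have : B / A * M3 = B / A * M3 := rfl
    calc M2 * M3 ^ (-(ε2 - ε3) / ε3) ≤ B / A * M3 := key
      _ = B / A * M3 := rfl
  · intro x hx
    have hD : Real.exp ((ε2 - ε3) * x) ≤ M3 ^ (-(ε2 - ε3) / ε3) := by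
      rw [Real.rpow_def_of_pos hM3pos]
      apply Real.exp_le_exp.2
      have : (ε2 - ε3) * x ≤ (ε2 - ε3) * (-(Real.log M3) / ε3) :=
        mul_le_mul_of_nonneg_left hx (by linarith)
      calc (ε2 - ε3) * x ≤ (ε2 - ε3) * (-(Real.log M3) / ε3) := this
        _ = Real.log M3 * (-(ε2 - ε3) / ε3) := by ring
    have key2 : M2 * Real.exp ((ε2 - ε3) * x) ≤ B / A * M3 := by
      calc M2 * Real.exp ((ε2 - ε3) * x) ≤ M2 * M3 ^ (-(ε2 - ε3) / ε3) :=
            mul_le_mul_of_nonneg_left hD hM2.le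
        _ ≤ B / A * M3 := key
    set E1 := Real.exp (l0 * x)
    set E3 := Real.exp ((l0 + ε3) * x)
    set D := Real.exp ((ε2 - ε3) * x)
    have hE : E1 * Real.exp (ε2 * x) = E3 * D := by
      rw [← Real.exp_add, ← Real.exp_add]; ring_nf
    have hRHS : (γ / A) * (E1 * A - M3 * E3 * B) = γ * E1 - γ * (B / A * M3) * E3 := by
      field_simp
    rw [hRHS, ge_iff_le]
    have hE3pos : 0 < E3 := Real.exp_pos _
    have hLHS : γ * E1 * (1 - M2 * Real.exp (ε2 * x)) = γ * E1 - γ * (M2 * D) * E3 := by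
      have : γ * E1 * (1 - M2 * Real.exp (ε2 * x)) = γ * E1 - γ * M2 * (E1 * Real.exp (ε2 * x)) := by ring
      rw [this, hE]; ring
    rw [hLHS]
    have : γ * (M2 * D) * E3 ≤ γ * (B / A * M3) * E3 := by
      apply mul_le_mul_of_nonneg_right _ hE3pos.le
      exact mul_le_mul_of_nonneg_left key2 hγ.le
    linarith
end

section
/- Let K : ℝ → ℝ be nonnegative and non-decreasing, and suppose there are constants σ > 0, c > 0 and x̄ ∈ ℝ such that ∫_{−∞}^{x} K(y) dy ≤ (c/σ)·K(x) for all x < x̄ (the integral being finite). Then there exists η > 0 such that K(x − η) ≤ K(x)/2 for all x < x̄; consequently, with μ0 = (ln 2)/η, the function x ↦ e^{−μ0 x} K(x) is bounded as x → −∞. -/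
open MeasureTheory Set

theorem stmt_11 (K : ℝ → ℝ) (hpos : ∀ x, 0 ≤ K x) (hmono : Monotone K)
    (σ c xb : ℝ) (hσ : 0 < σ) (hc : 0 < c)
    (hintK : ∀ x < xb, MeasureTheory.IntegrableOn K (Set.Iic x))
    (hineq : ∀ x < xb, (∫ y in Set.Iic x, K y) ≤ (c / σ) * K x) :
    ∃ η > (0 : ℝ), (∀ x < xb, K (x - η) ≤ K x / 2) ∧
      ∃ B : ℝ, ∀ x < xb, Real.exp (-(Real.log 2 / η) * x) * K x ≤ B := by
  set η : ℝ := 2 * c / σ with hη_def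
  have hη : 0 < η := by positivity
  refine ⟨η, hη, ?_⟩
  have hhalf : ∀ x < xb, K (x - η) ≤ K x / 2 := by
    intro x hx
    have hsub : Ioc (x - η) x ⊆ Iic x := Set.Ioc_subset_Iic_self
    have hintIoc : IntegrableOn K (Ioc (x - η) x) := (hintK x hx).mono_set hsub
    have h1 : η * K (x - η) ≤ ∫ y in Ioc (x - η) x, K y := by
      have hconst : (∫ _ in Ioc (x - η) x, K (x - η)) = η * K (x - η) := by
        rw [setIntegral_const, Measure.real, Real.volume_Ioc, smul_eq_mul]
        congr 1
        rw [ENNReal.toReal_ofReal (by linarith)]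
        ring
      rw [← hconst]
      apply setIntegral_mono_on (integrableOn_const (by
        rw [Real.volume_Ioc]; exact ENNReal.ofReal_ne_top)) hintIoc measurableSet_Ioc
      intro y hy
      exact hmono (le_of_lt hy.1)
    have h2 : (∫ y in Ioc (x - η) x, K y) ≤ ∫ y in Iic x, K y := by
      apply setIntegral_mono_set (hintK x hx)
      · exact Filter.Eventually.of_forall fun y => hpos y
      · exact Filter.Eventually.of_forall hsub
    have h3 : η * K (x - η) ≤ (c / σ) * K x := le_trans (le_trans h1 h2) (hineq x hx)
    have hcs : c / σ = η / 2 := by rw [hη_def]; ring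
    rw [hcs] at h3
    have := hpos x
    nlinarith
  refine ⟨hhalf, ?_⟩
  set μ0 : ℝ := Real.log 2 / η with hμ0_def
  have hlog2 : 0 < Real.log 2 := Real.log_pos (by norm_num)
  have hμ0 : 0 < μ0 := div_pos hlog2 hη
  have hμη : μ0 * η = Real.log 2 := by rw [hμ0_def]; exact div_mul_cancel₀ _ hη.ne'
  set f : ℝ → ℝ := fun x => Real.exp (-μ0 * x) * K x with hf_def
  have hstep : ∀ x, x + η < xb → f x ≤ f (x + η) := by
    intro x hx
    have hK : K x ≤ K (x + η) / 2 := by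
      have := hhalf (x + η) hx
      simpa using this
    have hexp : Real.exp (-μ0 * x) = Real.exp (-μ0 * (x + η)) * 2 := by
      rw [← Real.exp_log (show (0:ℝ) < 2 by norm_num), ← Real.exp_add]
      congr 1
      rw [← hμη]; ring
    calc f x = Real.exp (-μ0 * x) * K x := rfl
      _ ≤ Real.exp (-μ0 * x) * (K (x + η) / 2) := by
          apply mul_le_mul_of_nonneg_left hK (Real.exp_nonneg _)
      _ = Real.exp (-μ0 * (x + η)) * K (x + η) := by rw [hexp]; ring
  have hiter : ∀ n : ℕ, ∀ x, x + n * η < xb → f x ≤ f (x + n * η) := by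
    intro n
    induction n with
    | zero => intro x hx; simp
    | succ n ih =>
      intro x hx
      have h1 : x + n * η < xb := by
        have : (n : ℝ) * η < (n + 1) * η := by nlinarith
        push_cast at hx ⊢
        linarith
      have h2 : (x + n * η) + η < xb := by push_cast at hx ⊢; linarith
      calc f x ≤ f (x + n * η) := ih x h1
        _ ≤ f ((x + n * η) + η) := hstep _ h2
        _ = f (x + (n + 1 : ℕ) * η) := by push_cast; ring_nf
  refine ⟨Real.exp (-μ0 * (xb - η)) * K xb, ?_⟩
  intro x hx
  have ht : 0 < (xb - x) / η := div_pos (by linarith) hη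
  set n : ℕ := ⌈(xb - x) / η⌉₊ - 1 with hn_def
  have hceil : 1 ≤ ⌈(xb - x) / η⌉₊ := Nat.one_le_ceil_iff.2 ht
  have hnlt : (n : ℝ) < (xb - x) / η := by
    have : (⌈(xb - x) / η⌉₊ : ℝ) < (xb - x) / η + 1 := by
      exact_mod_cast Nat.ceil_lt_add_one (le_of_lt ht)
    have hcast : (n : ℝ) = (⌈(xb - x) / η⌉₊ : ℝ) - 1 := by
      rw [hn_def]; push_cast [Nat.cast_sub hceil]; ring
    linarith
  have hnge : (xb - x) / η - 1 ≤ (n : ℝ) := by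
    have : (xb - x) / η ≤ (⌈(xb - x) / η⌉₊ : ℝ) := Nat.le_ceil _
    have hcast : (n : ℝ) = (⌈(xb - x) / η⌉₊ : ℝ) - 1 := by
      rw [hn_def]; push_cast [Nat.cast_sub hceil]; ring
    linarith
  have hlt : x + n * η < xb := by
    have := (lt_div_iff₀ hη).1 hnlt
    linarith
  have hge : xb - η ≤ x + n * η := by
    have := (div_le_iff₀ hη).1 (by linarith : (xb - x) / η ≤ (n : ℝ) + 1)
    nlinarith
  have hmain : f x ≤ f (x + n * η) := hiter n x hlt
  have hbound : f (x + n * η) ≤ Real.exp (-μ0 * (xb - η)) * K xb := by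
    apply mul_le_mul
    · apply Real.exp_le_exp.2
      nlinarith
    · exact hmono (le_of_lt hlt)
    · exact hpos _
    · exact Real.exp_nonneg _
  have : Real.exp (-(Real.log 2 / η) * x) * K x = f x := rfl
  rw [this]
  exact le_trans hmain hbound
end

section
/- Let d2 > 0, c > 0, γ, δ ≥ 0, and suppose I : ℝ → ℝ is a C² nonnegative function with I(x) → 0 as x → ±∞ and I'(x) → 0 as x → ∞, satisfying −d2·I''(x) + c·I'(x) + (γ+δ)·I(x) ≤ (γ+δ)·I(x) for all x (i.e., c·I'(x) ≤ d2·I''(x)). Then I ≡ 0. -/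
theorem stmt_12 (d2 c γ δ : ℝ) (hd2 : 0 < d2) (hc : 0 < c) (hγ : 0 ≤ γ) (hδ : 0 ≤ δ)
    (I : ℝ → ℝ) (hI : ContDiff ℝ 2 I) (hpos : ∀ x, 0 ≤ I x)
    (hbot : Filter.Tendsto I Filter.atBot (nhds 0))
    (htop : Filter.Tendsto I Filter.atTop (nhds 0))
    (htop' : Filter.Tendsto (deriv I) Filter.atTop (nhds 0))
    (hineq : ∀ x, c * deriv I x ≤ d2 * deriv (deriv I) x) :
    ∀ x, I x = 0 := by
  have hd : Differentiable ℝ I := hI.differentiable (by norm_num)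
  have hI' : ContDiff ℝ 1 (deriv I) := by
    have h2 : ContDiff ℝ ((1 : ℕ) + 1) I := by exact_mod_cast hI
    exact (contDiff_succ_iff_deriv.mp h2).2.2
  have hd' : Differentiable ℝ (deriv I) := hI'.differentiable (by norm_num)
  set k := c / d2 with hk
  have hkpos : 0 < k := div_pos hc hd2
  set g : ℝ → ℝ := fun x => Real.exp (-(k * x)) * deriv I x with hg
  have hgd : ∀ x, HasDerivAt g
      (Real.exp (-(k * x)) * (deriv (deriv I) x - k * deriv I x)) x := by
    intro x
    have hlin : HasDerivAt (fun x : ℝ => -(k * x)) (-k) x := by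
      simpa using ((hasDerivAt_id x).const_mul k).fun_neg
    have hexp : HasDerivAt (fun x : ℝ => Real.exp (-(k * x)))
        (Real.exp (-(k * x)) * (-k)) x := (Real.hasDerivAt_exp _).comp x hlin
    have := hexp.fun_mul (hd' x).hasDerivAt
    refine this.congr_deriv ?_
    ring
  have hderiv_nonneg : ∀ x, 0 ≤ Real.exp (-(k * x)) * (deriv (deriv I) x - k * deriv I x) := by
    intro x
    have h1 : k * deriv I x ≤ deriv (deriv I) x := by
      rw [hk, div_mul_eq_mul_div, div_le_iff₀ hd2]
      nlinarith [hineq x]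
    have := Real.exp_pos (-(k * x))
    nlinarith
  have hgmono : Monotone g := by
    apply monotone_of_deriv_nonneg
    · exact fun x => (hgd x).differentiableAt
    · intro x
      rw [(hgd x).deriv]
      exact hderiv_nonneg x
  -- deriv I ≤ 0 everywhere
  have hder : ∀ x, deriv I x ≤ 0 := by
    by_contra h
    push_neg at h
    obtain ⟨a, ha⟩ := h
    have hga : 0 < g a := mul_pos (Real.exp_pos _) ha
    have hge : ∀ x, a ≤ x → deriv I a ≤ deriv I x := by
      intro x hx
      have h1 : g a ≤ g x := hgmono hx
      have h2 : Real.exp (k * a) ≤ Real.exp (k * x) :=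
        Real.exp_le_exp.mpr (by nlinarith)
      have key : g a * Real.exp (k * a) ≤ g x * Real.exp (k * x) :=
        mul_le_mul h1 h2 (Real.exp_pos _).le (le_trans hga.le h1)
      have e1 : g a * Real.exp (k * a) = deriv I a := by
        rw [hg]; simp only
        rw [mul_comm (Real.exp _) (deriv I a), mul_assoc, ← Real.exp_add]
        simp
      have e2 : g x * Real.exp (k * x) = deriv I x := by
        rw [hg]; simp only
        rw [mul_comm (Real.exp _) (deriv I x), mul_assoc, ← Real.exp_add]
        simp
      rw [e1, e2] at key
      exact key
    have hev : ∀ᶠ x in Filter.atTop, deriv I x < deriv I a :=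
      htop'.eventually_lt_const ha
    obtain ⟨x, hx1, hx2⟩ := (hev.and (Filter.eventually_ge_atTop a)).exists
    exact absurd (hge x hx2) (not_le.mpr hx1)
  have hant : Antitone I := antitone_of_deriv_nonpos hd hder
  intro x
  have hle : I x ≤ 0 := by
    apply ge_of_tendsto hbot
    filter_upwards [Filter.eventually_le_atBot x] with y hy
    exact hant hy
  linarith [hpos x]
end

section
/- Let d3 > 0, c > 0, γ > 0, and let I : ℝ → ℝ be continuous, nonnegative, integrable on ℝ, with I(x) → 0 as x → ∞. Define R(x) = (γ/c)∫_{−∞}^{x} I(y) dy + (γ/c)∫_{x}^{∞} e^{(c/d3)(x−y)} I(y) dy. Then R satisfies −d3·R''(x) + c·R'(x) = γ·I(x) for all x, R is non-decreasing, R(x) → 0 as x → −∞, R(x) → (γ/c)∫_ℝ I(y) dy as x → ∞, and R'(x) = (γ/d3)∫_{x}^{∞} e^{(c/d3)(x−y)} I(y) dy ≥ 0 with R'(x) → 0 as x → ∞. -/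
open MeasureTheory Set Filter Real Topology

set_option maxHeartbeats 1000000

theorem stmt_14 (d3 c γ : ℝ) (hd3 : 0 < d3) (hc : 0 < c) (hγ : 0 < γ)
    (I : ℝ → ℝ) (hcont : Continuous I) (hpos : ∀ x, 0 ≤ I x)
    (hint : MeasureTheory.Integrable I)
    (htop : Filter.Tendsto I Filter.atTop (nhds 0)) :
    let R : ℝ → ℝ := fun x => (γ / c) * (∫ y in Set.Iic x, I y) +
      (γ / c) * ∫ y in Set.Ici x, Real.exp ((c / d3) * (x - y)) * I y
    (∀ x, -d3 * deriv (deriv R) x + c * deriv R x = γ * I x) ∧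
    Monotone R ∧
    Filter.Tendsto R Filter.atBot (nhds 0) ∧
    Filter.Tendsto R Filter.atTop (nhds ((γ / c) * ∫ y, I y)) ∧
    (∀ x, deriv R x = (γ / d3) * ∫ y in Set.Ici x, Real.exp ((c / d3) * (x - y)) * I y ∧
      0 ≤ deriv R x) ∧
    Filter.Tendsto (deriv R) Filter.atTop (nhds 0) := by
  intro R
  set k : ℝ := c / d3 with hk
  have hk0 : 0 < k := div_pos hc hd3
  set g : ℝ → ℝ := fun y => Real.exp (-(k * y)) * I y with hgdef
  have hgc : Continuous g := (Real.continuous_exp.comp (continuous_const.mul continuous_id).neg).mul hcont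
  -- integrability of g on Ici a
  have hgint : ∀ a : ℝ, IntegrableOn g (Ici a) := by
    intro a
    refine Integrable.mono ((hint.const_mul (Real.exp (-(k * a)))).integrableOn)
      hgc.aestronglyMeasurable.restrict ?_
    rw [ae_restrict_iff' measurableSet_Ici]
    filter_upwards with y hy
    simp only [hgdef, Real.norm_eq_abs, abs_mul, abs_of_nonneg (hpos y),
      abs_of_pos (Real.exp_pos _)]
    have : Real.exp (-(k * y)) ≤ Real.exp (-(k * a)) :=
      Real.exp_le_exp.2 (by nlinarith [hy.out])
    exact mul_le_mul_of_nonneg_right this (hpos y)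
  set H : ℝ → ℝ := fun x => ∫ y in Ici x, g y with hHdef
  set F : ℝ → ℝ := fun x => ∫ y in Iic x, I y with hFdef
  -- split of H
  have hHsplit : ∀ a x : ℝ, a ≤ x → H a = (∫ y in a..x, g y) + H x := by
    intro a x hax
    have hdisj : Disjoint (Ico a x) (Ici x) := by
      simp only [Set.disjoint_left, mem_Ico, mem_Ici]
      exact fun y h hy => absurd hy (not_le.2 h.2)
    have := setIntegral_union hdisj measurableSet_Ici
      ((hgint a).mono_set Ico_subset_Ici_self) (hgint x) (f := g) (μ := volume)
    rw [Ico_union_Ici_eq_Ici hax] at this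
    rw [hHdef]
    simp only
    rw [this, intervalIntegral.integral_of_le hax,
      MeasureTheory.integral_Ioc_eq_integral_Ioo, MeasureTheory.integral_Ico_eq_integral_Ioo]
  -- H is differentiable with derivative -(g x)
  have hHderiv : ∀ x : ℝ, HasDerivAt H (-(g x)) x := by
    intro x
    have hii : IntervalIntegrable g volume (x - 1) x := by
      rw [intervalIntegrable_iff]
      exact ((hgint (min (x-1) x)).mono_set (fun y hy => le_of_lt hy.1))
    have h1 : HasDerivAt (fun t => H (x - 1) - ∫ y in (x-1)..t, g y) (-(g x)) x := by
      have := (intervalIntegral.integral_hasDerivAt_right hii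
        (hgc.stronglyMeasurableAtFilter _ _) hgc.continuousAt)
      exact this.const_sub _
    refine h1.congr_of_eventuallyEq ?_
    filter_upwards [Ioi_mem_nhds (show x - 1 < x by linarith)] with t ht
    have := hHsplit (x - 1) t (le_of_lt ht)
    linarith [this]
  -- F has derivative I x
  have hFderiv : ∀ x : ℝ, HasDerivAt F (I x) x := by
    intro x
    have hglob : ∀ t : ℝ, F t = F 0 + ∫ y in (0:ℝ)..t, I y := by
      intro t
      have := intervalIntegral.integral_Iic_sub_Iic (hint.integrableOn (s := Iic 0))
        (hint.integrableOn (s := Iic t)) (μ := volume)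
      rw [hFdef]; simp only; linarith [this]
    have h1 : HasDerivAt (fun t => F 0 + ∫ y in (0:ℝ)..t, I y) (I x) x := by
      have hii : IntervalIntegrable I volume 0 x := hint.intervalIntegrable
      exact (intervalIntegral.integral_hasDerivAt_right hii
        (hcont.stronglyMeasurableAtFilter _ _) hcont.continuousAt).const_add _
    exact h1.congr_of_eventuallyEq (by filter_upwards with t; exact (hglob t))
  set G : ℝ → ℝ := fun x => ∫ y in Ici x, Real.exp (k * (x - y)) * I y with hGdef
  have hGH : ∀ x : ℝ, G x = Real.exp (k * x) * H x := by
    intro x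
    rw [hGdef, hHdef]
    simp only
    rw [← integral_const_mul]
    refine setIntegral_congr_fun measurableSet_Ici (fun y _ => ?_)
    rw [hgdef]
    simp only
    rw [← mul_assoc, ← Real.exp_add]
    ring_nf
  have hGderiv : ∀ x : ℝ, HasDerivAt G (k * G x - I x) x := by
    intro x
    have he : HasDerivAt (fun t : ℝ => Real.exp (k * t)) (Real.exp (k * x) * k) x := by
      have : HasDerivAt (fun t : ℝ => k * t) k x := by
        simpa using (hasDerivAt_id x).const_mul k
      exact this.exp
    have h1 := he.mul (hHderiv x)
    have hfun : G = fun t => Real.exp (k * t) * H t := funext hGH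
    rw [hfun]
    refine h1.congr_deriv ?_
    have hx1 : Real.exp (k * x) * Real.exp (-(k * x)) = 1 := by
      rw [← Real.exp_add]; simp
    simp only [hgdef]
    linear_combination (-(I x)) * hx1
  have hGnonneg : ∀ x, 0 ≤ G x :=
    fun x => setIntegral_nonneg measurableSet_Ici
      (fun y _ => mul_nonneg (Real.exp_pos _).le (hpos y))
  -- R derivative
  have hRfun : R = fun x => (γ / c) * F x + (γ / c) * G x := rfl
  have hRderiv : ∀ x : ℝ, HasDerivAt R ((γ / d3) * G x) x := by
    intro x
    have h1 := ((hFderiv x).const_mul (γ / c)).add ((hGderiv x).const_mul (γ / c))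
    rw [hRfun]
    refine h1.congr_deriv ?_
    rw [hk]
    field_simp
    ring
  have hRd : deriv R = fun x => (γ / d3) * G x := funext fun x => (hRderiv x).deriv
  have hRd2 : ∀ x, deriv (deriv R) x = (γ / d3) * (k * G x - I x) := by
    intro x
    rw [hRd]
    exact ((hGderiv x).const_mul (γ / d3)).deriv
  -- limits of F
  have hF_bot : Tendsto F atBot (𝓝 0) := by
    have h1 : Tendsto (fun x => ∫ y in x..(0:ℝ), I y) atBot (𝓝 (F 0)) :=
      intervalIntegral_tendsto_integral_Iic 0 hint.integrableOn tendsto_id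
    have h2 : Tendsto (fun x => F 0 - ∫ y in x..(0:ℝ), I y) atBot (𝓝 (F 0 - F 0)) :=
      tendsto_const_nhds.sub h1
    rw [sub_self] at h2
    refine h2.congr (fun x => ?_)
    have := intervalIntegral.integral_Iic_sub_Iic (hint.integrableOn (s := Iic x))
      (hint.integrableOn (s := Iic 0)) (μ := volume)
    rw [hFdef]; simp only; linarith [this]
  have hF_top : Tendsto F atTop (𝓝 (∫ y, I y)) := by
    have h1 : Tendsto (fun x => ∫ y in (0:ℝ)..x, I y) atTop (𝓝 (∫ y in Ioi (0:ℝ), I y)) :=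
      intervalIntegral_tendsto_integral_Ioi 0 hint.integrableOn tendsto_id
    have h2 : Tendsto (fun x => F 0 + ∫ y in (0:ℝ)..x, I y) atTop
        (𝓝 (F 0 + ∫ y in Ioi (0:ℝ), I y)) := tendsto_const_nhds.add h1
    have h3 : F 0 + ∫ y in Ioi (0:ℝ), I y = ∫ y, I y := by
      rw [hFdef]; simp only
      rw [intervalIntegral.integral_Iic_add_Ioi hint.integrableOn hint.integrableOn]
    rw [h3] at h2
    refine h2.congr (fun x => ?_)
    have := intervalIntegral.integral_Iic_sub_Iic (hint.integrableOn (s := Iic 0))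
      (hint.integrableOn (s := Iic x)) (μ := volume)
    rw [hFdef]; simp only; linarith [this]
  -- integrability of the G-integrand
  have hGint : ∀ x : ℝ, IntegrableOn (fun y => Real.exp (k * (x - y)) * I y) (Ici x) := by
    intro x
    refine Integrable.mono (hint.integrableOn) ((Continuous.mul
      (Real.continuous_exp.comp (by continuity)) hcont).aestronglyMeasurable.restrict) ?_
    rw [ae_restrict_iff' measurableSet_Ici]
    filter_upwards with y hy
    simp only [Real.norm_eq_abs, abs_mul, abs_of_nonneg (hpos y), abs_of_pos (Real.exp_pos _),
      abs_of_nonneg (hpos y)]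
    have : Real.exp (k * (x - y)) ≤ 1 := by
      rw [show (1:ℝ) = Real.exp 0 by simp]
      exact Real.exp_le_exp.2 (by nlinarith [hy.out])
    nlinarith [hpos y]
  -- limit of G at -infty
  have hG_bot : Tendsto G atBot (𝓝 0) := by
    rw [NormedAddCommGroup.tendsto_nhds_zero]
    intro ε hε
    obtain ⟨M, hM⟩ : ∃ M, F M < ε / 2 := by
      have := (NormedAddCommGroup.tendsto_nhds_zero.1 hF_bot) (ε / 2) (by linarith)
      rw [eventually_atBot] at this
      obtain ⟨M, hM⟩ := this
      exact ⟨M, by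
        have h := hM M le_rfl
        rw [Real.norm_eq_abs, abs_of_nonneg (show 0 ≤ F M from setIntegral_nonneg measurableSet_Iic
          (fun y _ => hpos y))] at h
        exact h⟩
    have hC : (0:ℝ) ≤ ∫ y, I y := integral_nonneg hpos
    have htail : Tendsto (fun x => Real.exp (k * (x - M)) * ∫ y, I y) atBot (𝓝 0) := by
      have h1 : Tendsto (fun x : ℝ => k * (x - M)) atBot atBot := by
        apply Tendsto.const_mul_atBot hk0
        exact tendsto_atBot_add_const_right _ _ tendsto_id
      have := (Real.tendsto_exp_atBot.comp h1).mul_const (∫ y, I y)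
      simpa using this
    have hev := (NormedAddCommGroup.tendsto_nhds_zero.1 htail) (ε / 2) (by linarith)
    rw [eventually_atBot] at hev
    obtain ⟨N, hN⟩ := hev
    rw [eventually_atBot]
    refine ⟨min N M, fun x hx => ?_⟩
    have hxM : x ≤ M := le_trans hx (min_le_right _ _)
    have hxN : x ≤ N := le_trans hx (min_le_left _ _)
    -- bound G x
    have hbound : G x ≤ F M + Real.exp (k * (x - M)) * ∫ y, I y := by
      have hdisj : Disjoint (Ico x M) (Ici M) := by
        simp only [Set.disjoint_left, mem_Ico, mem_Ici]
        exact fun y h hy => absurd hy (not_le.2 h.2)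
      have hsplit := setIntegral_union hdisj measurableSet_Ici
        ((hGint x).mono_set Ico_subset_Ici_self) ((hGint x).mono_set (Ici_subset_Ici.2 hxM))
        (f := fun y => Real.exp (k * (x - y)) * I y) (μ := volume)
      rw [Ico_union_Ici_eq_Ici hxM] at hsplit
      have h1 : (∫ y in Ico x M, Real.exp (k * (x - y)) * I y) ≤ F M := by
        have step1 : (∫ y in Ico x M, Real.exp (k * (x - y)) * I y) ≤ ∫ y in Ico x M, I y := by
          refine setIntegral_mono_on ((hGint x).mono_set Ico_subset_Ici_self)
            (hint.integrableOn) measurableSet_Ico (fun y hy => ?_)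
          have : Real.exp (k * (x - y)) ≤ 1 := by
            rw [show (1:ℝ) = Real.exp 0 by simp]
            exact Real.exp_le_exp.2 (by nlinarith [hy.1])
          nlinarith [hpos y]
        have step2 : (∫ y in Ico x M, I y) ≤ F M := by
          refine setIntegral_mono_set hint.integrableOn
            (Filter.Eventually.of_forall fun y => hpos y) ?_
          exact Filter.Eventually.of_forall fun y hy => le_of_lt hy.2
        linarith
      have h2 : (∫ y in Ici M, Real.exp (k * (x - y)) * I y)
          ≤ Real.exp (k * (x - M)) * ∫ y, I y := by
        have step1 : (∫ y in Ici M, Real.exp (k * (x - y)) * I y)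
            ≤ ∫ y in Ici M, Real.exp (k * (x - M)) * I y := by
          refine setIntegral_mono_on ((hGint x).mono_set (Ici_subset_Ici.2 hxM))
            ((hint.const_mul _).integrableOn) measurableSet_Ici (fun y hy => ?_)
          have : Real.exp (k * (x - y)) ≤ Real.exp (k * (x - M)) :=
            Real.exp_le_exp.2 (by nlinarith [hy.out])
          nlinarith [hpos y]
        have step2 : (∫ y in Ici M, Real.exp (k * (x - M)) * I y)
            ≤ Real.exp (k * (x - M)) * ∫ y, I y := by
          rw [integral_const_mul]
          refine mul_le_mul_of_nonneg_left ?_ (Real.exp_pos _).le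
          exact setIntegral_le_integral hint (Filter.Eventually.of_forall fun y => hpos y)
        linarith
      rw [hGdef]; simp only
      linarith [hsplit, h1, h2]
    have := hN x hxN
    rw [Real.norm_eq_abs, abs_of_nonneg (mul_nonneg (Real.exp_pos _).le hC)] at this
    rw [Real.norm_eq_abs, abs_of_nonneg (hGnonneg x)]
    linarith
  have hexpInt : ∀ x : ℝ, IntegrableOn (fun y => Real.exp (k * (x - y))) (Ici x) := by
    intro x
    rw [integrableOn_Ici_iff_integrableOn_Ioi]
    have h1 : IntegrableOn (fun y => Real.exp (k * x) * Real.exp (-k * y)) (Ioi x) :=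
      (exp_neg_integrableOn_Ioi x hk0).const_mul _
    exact h1.congr_fun (fun y _ => by beta_reduce; rw [← Real.exp_add]; ring_nf) measurableSet_Ioi
  -- the exponential integral
  have hexpint : ∀ x : ℝ, (∫ y in Ici x, Real.exp (k * (x - y))) = 1 / k := by
    intro x
    rw [MeasureTheory.integral_Ici_eq_integral_Ioi]
    have hderiv : ∀ y ∈ Ici x, HasDerivAt (fun t => -(k⁻¹) * Real.exp (k * (x - t)))
        (Real.exp (k * (x - y))) y := by
      intro y _
      have h1 : HasDerivAt (fun t : ℝ => k * (x - t)) (-k) y := by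
        have : HasDerivAt (fun t : ℝ => x - t) (-1) y := (hasDerivAt_id y).const_sub x
        simpa using this.const_mul k
      have h2 := (h1.exp).const_mul (-(k⁻¹))
      refine h2.congr_deriv ?_
      linear_combination (Real.exp (k * (x - y))) * inv_mul_cancel₀ hk0.ne'
    have hintexp : IntegrableOn (fun y => Real.exp (k * (x - y))) (Ioi x) :=
      (hexpInt x).mono_set Ioi_subset_Ici_self
    have htend : Tendsto (fun t => -(k⁻¹) * Real.exp (k * (x - t))) atTop (𝓝 0) := by
      have h1 : Tendsto (fun t : ℝ => k * (x - t)) atTop atBot := by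
        apply Tendsto.const_mul_atBot hk0
        exact tendsto_atBot_add_const_left _ _ (tendsto_neg_atTop_atBot.comp tendsto_id)
      have := (Real.tendsto_exp_atBot.comp h1).const_mul (-(k⁻¹))
      simpa using this
    have := MeasureTheory.integral_Ioi_of_hasDerivAt_of_tendsto'
      (fun y hy => hderiv y hy) hintexp htend
    rw [this]
    simp
  -- limit of G at +infty
  have hG_top : Tendsto G atTop (𝓝 0) := by
    rw [NormedAddCommGroup.tendsto_nhds_zero]
    intro ε hε
    have hev := (Metric.tendsto_nhds.1 htop) (ε * k / 2) (by positivity)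
    rw [eventually_atTop] at hev
    obtain ⟨M, hM⟩ := hev
    rw [eventually_atTop]
    refine ⟨M, fun x hx => ?_⟩
    have hbound : G x ≤ ε * k / 2 * (1 / k) := by
      rw [hGdef]; simp only
      calc (∫ y in Ici x, Real.exp (k * (x - y)) * I y)
          ≤ ∫ y in Ici x, Real.exp (k * (x - y)) * (ε * k / 2) := by
            refine setIntegral_mono_on (hGint x)
              (MeasureTheory.IntegrableOn.congr_fun ((hexpInt x).const_mul (ε * k / 2))
                (fun y _ => by ring) measurableSet_Ici)
              measurableSet_Ici (fun y hy => ?_)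
            have := hM y (le_trans hx hy.out)
            rw [Real.dist_eq, sub_zero, abs_of_nonneg (hpos y)] at this
            nlinarith [Real.exp_pos (k * (x - y))]
        _ = ε * k / 2 * (1 / k) := by
            rw [show (fun y => Real.exp (k * (x - y)) * (ε * k / 2))
              = fun y => (ε * k / 2) * Real.exp (k * (x - y)) from funext fun y => by ring,
              integral_const_mul, hexpint x]
    rw [Real.norm_eq_abs, abs_of_nonneg (hGnonneg x)]
    have : ε * k / 2 * (1 / k) = ε / 2 := by field_simp
    linarith [hbound, this ▸ hbound]
  -- assemble
  refine ⟨?_, ?_, ?_, ?_, ?_, ?_⟩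
  · intro x
    rw [hRd2 x, hRd]
    simp only
    rw [hk]
    field_simp
    ring
  · refine monotone_of_deriv_nonneg (fun x => (hRderiv x).differentiableAt) (fun x => ?_)
    rw [hRd]
    exact mul_nonneg (by positivity) (hGnonneg x)
  · have := (hF_bot.const_mul (γ / c)).add (hG_bot.const_mul (γ / c))
    simpa using this
  · have := (hF_top.const_mul (γ / c)).add (hG_top.const_mul (γ / c))
    simpa using this
  · intro x
    constructor
    · rw [hRd]
    · rw [hRd]
      exact mul_nonneg (by positivity) (hGnonneg x)
  · rw [hRd]
    have := hG_top.const_mul (γ / d3)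
    simpa using this
end

section
/- Let d1 > 0, c > 0, β > 0, and let S : ℝ → ℝ be a C², bounded, positive function with S(−∞) = S₋ and S'(−∞) = 0, satisfying c·S'(x) = d1·S''(x) − g(x) where g is continuous, nonnegative, and not identically zero, with g integrable on ℝ. If additionally S' is bounded, then S'(x) = −(1/d1)∫_{x}^{∞} e^{(c/d1)(x−y)} g(y) dy ≤ 0 for all x; hence S is non-increasing, and if g > 0 on a set of positive measure in every neighborhood of some point then S(∞) < S(−∞). -/
open MeasureTheory Filter Set Real

theorem stmt_17 (d1 c β Sm : ℝ) (hd1 : 0 < d1) (hc : 0 < c) (hβ : 0 < β)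
    (S g : ℝ → ℝ) (hS : ContDiff ℝ 2 S) (hSb : ∃ B, ∀ x, |S x| ≤ B)
    (hSpos : ∀ x, 0 < S x)
    (hSlim : Filter.Tendsto S Filter.atBot (nhds Sm))
    (hS'lim : Filter.Tendsto (deriv S) Filter.atBot (nhds 0))
    (heq : ∀ x, c * deriv S x = d1 * deriv (deriv S) x - g x)
    (hgc : Continuous g) (hgpos : ∀ x, 0 ≤ g x) (hgne : g ≠ 0)
    (hgint : MeasureTheory.Integrable g)
    (hS'b : ∃ B, ∀ x, |deriv S x| ≤ B) :
    (∀ x, deriv S x = -(1 / d1) * ∫ y in Set.Ici x, Real.exp ((c / d1) * (x - y)) * g y) ∧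
    (∀ x, deriv S x ≤ 0) ∧ Antitone S ∧
    ∀ Sinf : ℝ, Filter.Tendsto S Filter.atTop (nhds Sinf) → Sinf < Sm := by
  obtain ⟨B, hB⟩ := hS'b
  set k := c / d1 with hk
  have hkpos : 0 < k := div_pos hc hd1
  have hSdiff : Differentiable ℝ S := hS.differentiable (by norm_num)
  have hS'cont : Continuous (deriv S) := hS.continuous_deriv (by norm_num)
  have hS'diff : Differentiable ℝ (deriv S) := by
    have h2 : ContDiff ℝ (1 + 1) S := by exact_mod_cast hS
    exact (contDiff_succ_iff_deriv.mp h2).2.2.differentiable (by norm_num)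
  -- the auxiliary function h
  set h : ℝ → ℝ := fun x => Real.exp (-k * x) * deriv S x with hh
  have hderiv : ∀ x, HasDerivAt h (Real.exp (-k * x) * g x / d1) x := by
    intro x
    have h1 : HasDerivAt (fun x : ℝ => Real.exp (-k * x)) (Real.exp (-k * x) * (-k)) x := by
      simpa using ((hasDerivAt_id x).const_mul (-k)).exp
    have h2 : HasDerivAt (deriv S) (deriv (deriv S) x) x := (hS'diff x).hasDerivAt
    have := h1.mul h2
    refine this.congr_deriv ?_
    have hx := heq x
    have hS'' : deriv (deriv S) x = (c * deriv S x + g x) / d1 := by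
      field_simp at hx ⊢; linarith
    rw [hS'', hk]
    field_simp
    ring
  -- integrability of the integrand on Ici x
  have hint : ∀ x : ℝ, IntegrableOn (fun y => Real.exp (-k * y) * g y) (Set.Ici x) := by
    intro x
    apply Integrable.mono' ((hgint.const_mul (Real.exp (-k * x))).integrableOn)
    · exact ((Real.continuous_exp.comp (continuous_const.mul continuous_id)).mul hgc).aestronglyMeasurable
    · filter_upwards [self_mem_ae_restrict (measurableSet_Ici : MeasurableSet (Set.Ici x))] with y hy
      rw [Real.norm_eq_abs, abs_of_nonneg (mul_nonneg (Real.exp_pos _).le (hgpos y))]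
      apply mul_le_mul_of_nonneg_right _ (hgpos y)
      exact Real.exp_le_exp.2 (by nlinarith [hkpos, hy.out])
  -- key representation of h
  have hrep : ∀ x, h x = -∫ y in Set.Ici x, Real.exp (-k * y) * g y / d1 := by
    intro x
    have hintd : ∀ x : ℝ, IntegrableOn (fun y => Real.exp (-k * y) * g y / d1) (Set.Ici x) := by
      intro x
      simpa [div_eq_mul_inv, mul_comm, IntegrableOn] using (hint x).mul_const (d1⁻¹)
    have hftc : ∀ T : ℝ, x ≤ T →
        (∫ y in x..T, Real.exp (-k * y) * g y / d1) = h T - h x := by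
      intro T hT
      apply intervalIntegral.integral_eq_sub_of_hasDerivAt
      · intro t _; exact hderiv t
      · exact (((Real.continuous_exp.comp (continuous_const.mul continuous_id)).mul hgc).div_const d1).intervalIntegrable x T
    -- h T tends to 0
    have hhT : Tendsto h atTop (nhds 0) := by
      apply squeeze_zero_norm (a := fun T => B * Real.exp (-k * T))
      · intro T
        rw [hh]
        simp only [norm_mul, Real.norm_eq_abs, Real.abs_exp]
        rw [mul_comm]
        exact mul_le_mul (hB T) le_rfl (Real.exp_pos _).le ((abs_nonneg _).trans (hB T))
      · have h1 : Tendsto (fun T : ℝ => -k * T) atTop atBot :=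
          (tendsto_id (α := ℝ)).const_mul_atTop_of_neg (neg_neg_iff_pos.mpr hkpos)
        have := (Real.tendsto_exp_atBot.comp h1).const_mul B
        simpa using this
    have h1 : Tendsto (fun T => ∫ y in x..T, Real.exp (-k * y) * g y / d1) atTop
        (nhds (∫ y in Set.Ici x, Real.exp (-k * y) * g y / d1)) := by
      rw [show (∫ y in Set.Ici x, Real.exp (-k * y) * g y / d1)
            = ∫ y in Set.Ioi x, Real.exp (-k * y) * g y / d1 from
          MeasureTheory.integral_Ici_eq_integral_Ioi]
      exact MeasureTheory.intervalIntegral_tendsto_integral_Ioi x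
        ((hintd x).mono_set Set.Ioi_subset_Ici_self) tendsto_id
    have h2 : Tendsto (fun T => ∫ y in x..T, Real.exp (-k * y) * g y / d1) atTop
        (nhds (0 - h x)) := by
      apply Tendsto.congr' _ (hhT.sub_const (h x))
      filter_upwards [eventually_ge_atTop x] with T hT
      exact (hftc T hT).symm
    have := tendsto_nhds_unique h1 h2
    rw [this]; ring
  -- the main formula
  have hform : ∀ x, deriv S x =
      -(1 / d1) * ∫ y in Set.Ici x, Real.exp ((c / d1) * (x - y)) * g y := by
    intro x
    have e1 : deriv S x = Real.exp (k * x) * h x := by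
      rw [hh]
      rw [← mul_assoc, ← Real.exp_add]
      norm_num
    rw [e1, hrep x]
    have e2 : (∫ y in Set.Ici x, Real.exp ((c / d1) * (x - y)) * g y)
        = Real.exp (k * x) * ∫ y in Set.Ici x, Real.exp (-k * y) * g y := by
      rw [← MeasureTheory.integral_const_mul]
      apply MeasureTheory.setIntegral_congr_fun measurableSet_Ici
      intro y _
      show Real.exp ((c / d1) * (x - y)) * g y
          = Real.exp (k * x) * (Real.exp (-k * y) * g y)
      have harg : (c / d1) * (x - y) = k * x + -k * y := by rw [hk]; ring
      rw [harg, Real.exp_add, mul_assoc]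
    have e3 : (∫ y in Set.Ici x, Real.exp (-k * y) * g y / d1)
        = (∫ y in Set.Ici x, Real.exp (-k * y) * g y) / d1 :=
      MeasureTheory.integral_div d1 _
    rw [e3, e2]
    field_simp
  -- nonnegativity of the integral
  have hintnn : ∀ x, 0 ≤ ∫ y in Set.Ici x, Real.exp ((c / d1) * (x - y)) * g y := by
    intro x
    apply MeasureTheory.setIntegral_nonneg measurableSet_Ici
    intro y _
    exact mul_nonneg (Real.exp_pos _).le (hgpos y)
  have hnonpos : ∀ x, deriv S x ≤ 0 := by
    intro x
    rw [hform x]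
    apply mul_nonpos_of_nonpos_of_nonneg _ (hintnn x)
    simp [le_of_lt, hd1, one_div, inv_nonneg]
  have hanti : Antitone S := antitone_of_deriv_nonpos hSdiff hnonpos
  refine ⟨hform, hnonpos, hanti, ?_⟩
  -- strict inequality
  intro Sinf hSinf
  obtain ⟨x0, hx0⟩ : ∃ x0, g x0 ≠ 0 := Function.ne_iff.mp hgne
  have hgx0 : 0 < g x0 := lt_of_le_of_ne (hgpos x0) (Ne.symm hx0)
  set a := x0 - 1 with ha
  -- the integral at a is positive
  have hIpos : 0 < ∫ y in Set.Ici a, Real.exp ((c / d1) * (a - y)) * g y := by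
    set F : ℝ → ℝ := fun y => Real.exp ((c / d1) * (a - y)) * g y with hF
    have hFc : Continuous F :=
      (Real.continuous_exp.comp (continuous_const.mul (continuous_const.sub continuous_id))).mul hgc
    have hFint : IntegrableOn F (Set.Ici a) := by
      apply Integrable.mono' hgint.integrableOn hFc.aestronglyMeasurable
      filter_upwards [self_mem_ae_restrict (measurableSet_Ici : MeasurableSet (Set.Ici a))] with y hy
      rw [hF]
      simp only
      rw [Real.norm_eq_abs, abs_of_nonneg (mul_nonneg (Real.exp_pos _).le (hgpos y))]
      have : Real.exp ((c / d1) * (a - y)) ≤ 1 := by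
        rw [← Real.exp_zero]
        apply Real.exp_le_exp.2
        have : a - y ≤ 0 := by linarith [hy.out]
        nlinarith [div_pos hc hd1]
      nlinarith [hgpos y]
    rw [MeasureTheory.setIntegral_pos_iff_support_of_nonneg_ae ?_ hFint]
    · -- positive measure of support
      have hopen : IsOpen {y | g y ≠ 0} := isOpen_ne.preimage hgc
      obtain ⟨ε, hε, hball⟩ := Metric.isOpen_iff.mp hopen x0 hx0
      have hsub : Set.Ioo x0 (x0 + ε) ⊆ Function.support F ∩ Set.Ici a := by
        intro y hy
        constructor
        · have : g y ≠ 0 := hball (by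
            rw [Metric.mem_ball, Real.dist_eq, abs_lt]
            constructor <;> [linarith [hy.1]; linarith [hy.2]])
          simp only [Function.mem_support, hF]
          exact mul_ne_zero (Real.exp_ne_zero _) this
        · exact Set.mem_Ici.2 (by linarith [hy.1])
      calc (0 : ENNReal) < ENNReal.ofReal ε := by simpa using hε
        _ = MeasureTheory.volume (Set.Ioo x0 (x0 + ε)) := by
            rw [Real.volume_Ioo]; ring_nf
        _ ≤ _ := measure_mono hsub
    · filter_upwards with y
      exact mul_nonneg (Real.exp_pos _).le (hgpos y)
  have hS'a : deriv S a < 0 := by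
    rw [hform a]
    apply mul_neg_of_neg_of_pos _ hIpos
    simp only [neg_neg, Left.neg_neg_iff]
    positivity
  -- strict decrease near a
  have hev : ∀ᶠ y in nhds a, deriv S y < 0 := by
    have := hS'cont.continuousAt (x := a)
    exact this.eventually_lt continuousAt_const hS'a
  obtain ⟨ε, hε, hball⟩ := Metric.eventually_nhds_iff_ball.mp hev
  set b := a + ε / 2 with hb
  have hab : a < b := by rw [hb]; linarith
  have hstrict : StrictAntiOn S (Set.Icc a b) := by
    apply strictAntiOn_of_deriv_neg (convex_Icc a b) hSdiff.continuous.continuousOn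
    intro y hy
    rw [interior_Icc] at hy
    apply hball
    rw [Metric.mem_ball, Real.dist_eq, abs_lt]
    constructor
    · linarith [hy.1]
    · have := hy.2; rw [hb] at this; linarith
  have hSab : S b < S a :=
    hstrict (Set.left_mem_Icc.2 hab.le) (Set.right_mem_Icc.2 hab.le) hab
  have h1 : Sinf ≤ S b := by
    apply le_of_tendsto hSinf
    filter_upwards [eventually_ge_atTop b] with x hx
    exact hanti hx
  have h2 : S a ≤ Sm := by
    apply ge_of_tendsto hSlim
    filter_upwards [eventually_le_atBot a] with x hx
    exact hanti hx
  linarith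
end
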